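/- arXiv:1101.0066 — 8 statements merged into one kernel-verified Lean document; each statement's English description precedes it below -/
import Mathlib

section
/- For every integer n ≥ 1, the sum over all diagonals d of the convex (n+3)-gon G_{n+3} of the binomial coefficient C(p(d), 2) equals (n+3)·C(n+3, 5), where p(d) is the number of diagonals crossing d. -/
/-- A diagonal of the convex `N`-gon with vertices labelled `1, …, N` in cyclic order:
a pair `(i, j)` with `1 ≤ i`, `i + 2 ≤ j ≤ N`, excluding the side `(1, N)`. -/
def IsDiag (N : ℕ) (d : ℕ × ℕ) : Prop :=
  1 ≤ d.1 ∧ d.1 + 2 ≤ d.2 ∧ d.2 ≤ N ∧ ¬(d.1 = 1 ∧ d.2 = N)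

instance (N : ℕ) (d : ℕ × ℕ) : Decidable (IsDiag N d) := by
  unfold IsDiag; infer_instance

/-- Two diagonals of a convex polygon cross (intersect at an interior point). -/
def Crosses (d e : ℕ × ℕ) : Prop :=
  (d.1 < e.1 ∧ e.1 < d.2 ∧ d.2 < e.2) ∨ (e.1 < d.1 ∧ d.1 < e.2 ∧ e.2 < d.2)

instance (d e : ℕ × ℕ) : Decidable (Crosses d e) := by
  unfold Crosses; infer_instance

/-- The finite set of all diagonals of the convex `N`-gon. -/
def Diags (N : ℕ) : Finset (ℕ × ℕ) :=
  (Finset.range (N + 1) ×ˢ Finset.range (N + 1)).filter (IsDiag N)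

/-- `crossNum N d` is the number of diagonals of the convex `N`-gon crossing `d`
(the number `p(d)` of distinguished points on `d`). -/
def crossNum (N : ℕ) (d : ℕ × ℕ) : ℕ :=
  ((Diags N).filter (fun e => Crosses d e)).card

/-!
A diagonal `(i, j)` with `j - i = k` leaves `k - 1` vertices on one side and `N - 1 - k` on the
other, and the diagonals crossing it are exactly those joining the two sides, so
`p(i, j) = (k - 1) * (N - 1 - k)`. For each `2 ≤ k ≤ N - 2` there are `N - k` diagonals with
`j - i = k`, so the sum becomes `∑ k, (N - k) * C((k - 1) * (N - 1 - k), 2)`, a polynomial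
identity in `N` that follows from a closed form of the partial sums.
-/

open Finset

theorem crossNum_eq {N i j : ℕ} (hd : IsDiag N (i, j)) :
    crossNum N (i, j) = (j - i - 1) * (N - 1 - (j - i)) := by
  obtain ⟨hi, hij, hj, -⟩ := hd
  have crossing : (Diags N).filter (Crosses (i, j)) =
      (Ioo i j ×ˢ Ioc j N) ∪ (Ico 1 i ×ˢ Ioo i j) := by
    ext ⟨a, b⟩
    simp only [Diags, IsDiag, Crosses, mem_filter, mem_product, mem_range, mem_union, mem_Ioo,
      mem_Ioc, mem_Ico]
    omega
  have disjoint : Disjoint (Ioo i j ×ˢ Ioc j N) (Ico 1 i ×ˢ Ioo i j) :=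
    disjoint_left.2 fun ⟨a, b⟩ h h' => by
      simp only [mem_product, mem_Ioo, mem_Ioc, mem_Ico] at h h'
      omega
  rw [crossNum, crossing, card_union_of_disjoint disjoint, card_product, card_product,
    Nat.card_Ioo, Nat.card_Ioc, Nat.card_Ico, mul_comm (i - 1), ← Nat.mul_add]
  congr 1
  omega

theorem card_filter_diags_sub_eq {N k : ℕ} (hk : 2 ≤ k) (hkN : k ≤ N - 2) :
    ((Diags N).filter fun d => d.2 - d.1 = k).card = N - k := by
  have fiber : (Diags N).filter (fun d => d.2 - d.1 = k) =
      (Icc 1 (N - k)).image fun i => (i, i + k) := by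
    ext ⟨a, b⟩
    simp only [Diags, IsDiag, mem_filter, mem_product, mem_range, mem_image, mem_Icc,
      Prod.mk.injEq]
    constructor
    · rintro ⟨⟨-, ha, -, hb, -⟩, rfl⟩
      exact ⟨a, ⟨ha, by omega⟩, rfl, by omega⟩
    · rintro ⟨i, hi, rfl, rfl⟩
      omega
  have injective : Function.Injective fun i : ℕ => (i, i + k) := fun _ _ h => (Prod.ext_iff.1 h).1
  rw [fiber, card_image_of_injective _ injective, Nat.card_Icc]
  omega

theorem sum_choose_crossNum_eq (N : ℕ) :
    ∑ d ∈ Diags N, (crossNum N d).choose 2 =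
      ∑ k ∈ Icc 2 (N - 2), (N - k) * ((k - 1) * (N - 1 - k)).choose 2 := by
  have gap_mem : ∀ d ∈ Diags N, d.2 - d.1 ∈ Icc 2 (N - 2) := by
    intro d hd
    simp only [Diags, IsDiag, mem_filter, mem_Icc] at hd ⊢
    omega
  rw [← sum_fiberwise_of_maps_to gap_mem]
  refine sum_congr rfl fun k hk => ?_
  rw [mem_Icc] at hk
  rw [← card_filter_diags_sub_eq hk.1 hk.2, ← smul_eq_mul, ← sum_const]
  refine sum_congr rfl fun d hd => ?_
  rw [mem_filter] at hd
  rw [← hd.2, ← crossNum_eq (mem_filter.1 hd.1).2]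

/-- Closed form of the partial sums, found by interpolation in `x` and `m`. -/
theorem sum_range_mul_choose_two_poly {K : Type*} [Field K] [CharZero K] (x : K) (m : ℕ) :
    ∑ j ∈ range m, (x + 1 - j) * (((j + 1) * (x - j)) * ((j + 1) * (x - j) - 1) / 2) =
      (m * (10 * x ^ 3 + 10 * x ^ 2 - 26 * x - 18) + m ^ 2 * (30 * x ^ 3 + 45 * x ^ 2 + 5)
        + m ^ 3 * (20 * x ^ 3 - 10 * x ^ 2 - 40 * x) + m ^ 4 * (-45 * x ^ 2 - 30 * x + 5)
        + m ^ 5 * (36 * x + 18) - 10 * m ^ 6) / 120 := by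
  induction m with
  | zero => simp
  | succ m ih =>
    rw [sum_range_succ, ih]
    push_cast
    ring

theorem cast_choose_five {K : Type*} [Field K] [CharZero K] (N : ℕ) :
    (N.choose 5 : K) = N * (N - 1) * (N - 2) * (N - 3) * (N - 4) / 120 := by
  have h := descPochhammer_eval_eq_descFactorial K N 5
  rw [Nat.descFactorial_eq_factorial_mul_choose] at h
  simp only [descPochhammer_succ_eval, descPochhammer_zero, Polynomial.eval_one] at h
  push_cast [Nat.factorial] at h
  rw [eq_div_iff (by norm_num)]
  linear_combination -h

theorem sum_Icc_mul_choose_two {N : ℕ} (hN : 3 ≤ N) :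
    ∑ k ∈ Icc 2 (N - 2), (N - k) * ((k - 1) * (N - 1 - k)).choose 2 = N * N.choose 5 := by
  obtain ⟨n, rfl⟩ : ∃ n, N = n + 3 := ⟨N - 3, by omega⟩
  have reindex : ∑ k ∈ Icc 2 (n + 3 - 2), (n + 3 - k) * ((k - 1) * (n + 3 - 1 - k)).choose 2 =
      ∑ j ∈ range n, (n + 1 - j) * ((j + 1) * (n - j)).choose 2 := by
    rw [show n + 3 - 2 = n + 1 by omega, ← Ico_add_one_right_eq_Icc,
      sum_Ico_eq_sum_range, show n + 1 + 1 - 2 = n by omega]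
    refine sum_congr rfl fun j _ => ?_
    rw [show n + 3 - (2 + j) = n + 1 - j by omega, show 2 + j - 1 = j + 1 by omega,
      show n + 3 - 1 - (2 + j) = n - j by omega]
  rw [reindex]
  apply Nat.cast_injective (R := ℚ)
  have summand : ∀ j ∈ range n, (((n + 1 - j) * ((j + 1) * (n - j)).choose 2 : ℕ) : ℚ) =
      (n + 1 - j) * (((j + 1) * (n - j)) * ((j + 1) * (n - j) - 1) / 2) := by
    intro j hj
    rw [mem_range] at hj
    push_cast [Nat.cast_choose_two, Nat.cast_sub hj.le, Nat.cast_sub (by omega : j ≤ n + 1)]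
    ring
  rw [Nat.cast_sum, sum_congr rfl summand, sum_range_mul_choose_two_poly, Nat.cast_mul,
    cast_choose_five]
  push_cast
  ring

theorem distinguished_segments_count_general (n : ℕ) :
    ∑ d ∈ Diags (n + 3), Nat.choose (crossNum (n + 3) d) 2
      = (n + 3) * Nat.choose (n + 3) 5 := by
  rw [sum_choose_crossNum_eq, sum_Icc_mul_choose_two (by omega)]

/-- For every `n ≥ 1`, the number of distinguished segments of the convex `(n+3)`-gon,
`S_{n+3} = Σ_d C(p(d), 2)`, equals `(n+3)·C(n+3, 5)`. -/
theorem distinguished_segments_count (n : ℕ) (hn : 1 ≤ n) :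
    ∑ d ∈ Diags (n + 3), Nat.choose (crossNum (n + 3) d) 2
      = (n + 3) * Nat.choose (n + 3) 5 :=
  distinguished_segments_count_general n
end

section
/- For every integer n ≥ 2, the quantity Σ_d C(p(d), 2) − T, where the sum is over all diagonals d of the convex (n+3)-gon G_{n+3}, p(d) is the number of diagonals crossing d, and T is the number of 3-element sets of pairwise crossing diagonals, equals 5·C(n+4, 6). -/
open Finset

/-!
A diagonal `(i, j)` is crossed by exactly `a * b` diagonals, where `a = j - i - 1` and
`b = N - 1 - (j - i)` count the vertices on its two sides. Grouping the diagonals by `j - i`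
turns `∑_d C(p(d), 2)` into a one-variable polynomial sum, which telescopes to `N * C(N, 5)`.
Three diagonals cross pairwise exactly when they are the long diagonals `(a, d), (b, e), (c, f)`
of a hexagon `a < b < c < d < e < f` of vertices, so `T = C(N, 6)`. Finally
`N * C(N, 5) - C(N, 6) = 5 * C(N, 5) + 5 * C(N, 6) = 5 * C(N + 1, 6)`.
-/

lemma mem_Diags {N : ℕ} {d : ℕ × ℕ} :
    d ∈ Diags N ↔ 1 ≤ d.1 ∧ d.1 + 2 ≤ d.2 ∧ d.2 ≤ N ∧ ¬(d.1 = 1 ∧ d.2 = N) := by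
  simp only [Diags, IsDiag, mem_filter, mem_product, mem_range]
  omega

lemma crossNum_eq_s3 {N : ℕ} {d : ℕ × ℕ} (hd : d ∈ Diags N) :
    crossNum N d = (d.2 - d.1 - 1) * (N - 1 - (d.2 - d.1)) := by
  obtain ⟨i, j⟩ := d
  rw [mem_Diags] at hd
  have hsplit : (Diags N).filter (Crosses (i, j))
      = Ioo i j ×ˢ Ioc j N ∪ Ico 1 i ×ˢ Ioo i j := by
    ext ⟨k, l⟩
    simp only [mem_filter, mem_Diags, Crosses, mem_union, mem_product, mem_Ioo, mem_Ioc, mem_Ico]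
    omega
  have hdisj : Disjoint (Ioo i j ×ˢ Ioc j N) (Ico 1 i ×ˢ Ioo i j) := by
    rw [disjoint_left]
    rintro ⟨k, l⟩ h h'
    simp only [mem_product, mem_Ioo, mem_Ioc, mem_Ico] at h h'
    omega
  rw [crossNum, hsplit, card_union_of_disjoint hdisj, card_product, card_product,
    Nat.card_Ioo, Nat.card_Ioc, Nat.card_Ico, mul_comm (i - 1), ← mul_add]
  exact congrArg _ (by omega)

lemma Diags_eq_biUnion (N : ℕ) :
    Diags N =
      (range (N - 3)).biUnion fun t => (Icc 1 (N - 2 - t)).image fun i => (i, i + t + 2) := by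
  ext ⟨i, j⟩
  simp only [mem_Diags, mem_biUnion, mem_range, mem_image, mem_Icc, Prod.mk.injEq]
  constructor
  · intro h
    exact ⟨j - i - 2, by omega, i, by omega, rfl, by omega⟩
  · rintro ⟨t, ht, i, hi, rfl, rfl⟩
    omega

lemma sum_Diags_eq_sum_range {M : Type*} [AddCommMonoid M] (N : ℕ) (f : ℕ → M) :
    ∑ d ∈ Diags N, f (d.2 - d.1) = ∑ t ∈ range (N - 3), (N - 2 - t) • f (t + 2) := by
  rw [Diags_eq_biUnion, sum_biUnion]
  · refine sum_congr rfl fun t _ => ?_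
    rw [sum_image fun a _ b _ h => by simpa using h]
    simp [Nat.card_Icc, show ∀ i, i + t + 2 - i = t + 2 by omega]
  · intro a _ b _ hab
    simp only [Function.onFun, disjoint_left, mem_image, mem_Icc]
    rintro _ ⟨i, -, rfl⟩ ⟨i', -, h⟩
    simp only [Prod.mk.injEq] at h
    omega

lemma sum_range_mul_choose_two (m : ℕ) :
    ∑ t ∈ range m, (m + 1 - t) * ((t + 1) * (m - t)).choose 2 = (m + 3) * (m + 3).choose 5 := by
  -- a discrete primitive in `K` of the summand, found by interpolation
  set F : ℚ → ℚ := fun K => (10 * m ^ 3 * K * (K + 1) * (2 * K + 1)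
    + 5 * m ^ 2 * K * (2 + 9 * K) * (1 - K ^ 2)
    + 2 * m * K * (-13 - 20 * K ^ 2 - 15 * K ^ 3 + 18 * K ^ 4)
    + K * (-18 + 5 * K + 5 * K ^ 3 + 18 * K ^ 4 - 10 * K ^ 5)) / 120 with hF
  have hstep : ∀ t ∈ range m,
      (((m + 1 - t) * ((t + 1) * (m - t)).choose 2 : ℕ) : ℚ) = F ↑(t + 1) - F t := by
    intro t ht
    have ht : t ≤ m := (mem_range.1 ht).le
    rw [Nat.cast_mul, Nat.cast_choose_two, hF, Nat.cast_succ]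
    push_cast [Nat.cast_sub ht, Nat.cast_sub (ht.trans m.le_succ)]
    ring
  apply Nat.cast_injective (R := ℚ)
  rw [Nat.cast_sum, sum_congr rfl hstep, sum_range_sub (fun t : ℕ => F t), Nat.cast_mul,
    Nat.cast_choose_eq_descPochhammer_div]
  simp [hF, descPochhammer_succ_eval, Nat.factorial]
  ring

lemma sum_choose_two_crossNum (N : ℕ) :
    ∑ d ∈ Diags N, (crossNum N d).choose 2 = N * N.choose 5 := by
  calc ∑ d ∈ Diags N, (crossNum N d).choose 2
      = ∑ d ∈ Diags N, (fun L => ((L - 1) * (N - 1 - L)).choose 2) (d.2 - d.1) :=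
        sum_congr rfl fun d hd => by rw [crossNum_eq_s3 hd]
    _ = ∑ t ∈ range (N - 3), (N - 2 - t) * ((t + 1) * (N - 3 - t)).choose 2 := by
        rw [sum_Diags_eq_sum_range N (fun L => ((L - 1) * (N - 1 - L)).choose 2)]
        exact sum_congr rfl fun t _ => by rw [smul_eq_mul]; congr 3; omega
    _ = N * N.choose 5 := by
        obtain hN | ⟨m, rfl⟩ : N < 3 ∨ ∃ m, N = m + 3 :=
          (lt_or_ge N 3).imp_right fun h => ⟨N - 3, by omega⟩
        · rw [Nat.sub_eq_zero_of_le hN.le, Nat.choose_eq_zero_of_lt (by omega), range_zero,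
            sum_empty, mul_zero]
        · rw [Nat.add_sub_cancel, ← sum_range_mul_choose_two]
          rfl

lemma Nat.self_mul_choose_eq (n k : ℕ) :
    n * n.choose k = (k + 1) * n.choose (k + 1) + k * n.choose k := by
  rcases le_or_gt k n with h | h
  · rw [mul_comm (k + 1), Nat.choose_succ_right_eq, mul_comm k, ← mul_add, mul_comm]
    congr 1
    omega
  · simp [Nat.choose_eq_zero_of_lt h, Nat.choose_eq_zero_of_lt (h.trans k.lt_succ_self)]

lemma Crosses.fst_ne {d e : ℕ × ℕ} (h : Crosses d e) : d.1 ≠ e.1 := by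
  unfold Crosses at h
  omega

def triangleOf (x : Fin 6 → ℕ) : Finset (ℕ × ℕ) :=
  {(x 0, x 3), (x 1, x 4), (x 2, x 5)}

def endpoints (s : Finset (ℕ × ℕ)) : Finset ℕ :=
  s.image Prod.fst ∪ s.image Prod.snd

lemma endpoints_triangleOf (x : Fin 6 → ℕ) : endpoints (triangleOf x) = univ.image x := by
  ext v
  simp only [endpoints, triangleOf, mem_union, mem_image, mem_insert, mem_singleton, mem_univ,
    true_and, Fin.exists_fin_succ]
  aesop

lemma card_triangleOf {x : Fin 6 → ℕ} (hx : StrictMono x) : (triangleOf x).card = 3 := by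
  have h01 := hx (show (0 : Fin 6) < 1 by decide)
  have h12 := hx (show (1 : Fin 6) < 2 by decide)
  rw [triangleOf, card_insert_of_notMem (by simp; omega), card_insert_of_notMem (by simp; omega),
    card_singleton]

lemma triangleOf_mem {N : ℕ} {x : Fin 6 → ℕ} (hx : StrictMono x) (h0 : 1 ≤ x 0) (h5 : x 5 ≤ N) :
    triangleOf x ∈ ((Diags N).powersetCard 3).filter
      (fun s => ∀ d ∈ s, ∀ e ∈ s, d ≠ e → Crosses d e) := by
  have h01 := hx (show (0 : Fin 6) < 1 by decide)
  have h12 := hx (show (1 : Fin 6) < 2 by decide)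
  have h23 := hx (show (2 : Fin 6) < 3 by decide)
  have h34 := hx (show (3 : Fin 6) < 4 by decide)
  have h45 := hx (show (4 : Fin 6) < 5 by decide)
  rw [mem_filter, mem_powersetCard]
  refine ⟨⟨?_, ?_⟩, ?_⟩
  · intro d hd
    simp only [triangleOf, mem_insert, mem_singleton] at hd
    rcases hd with rfl | rfl | rfl <;> rw [mem_Diags] <;> omega
  · exact card_triangleOf hx
  · intro d hd e he hde
    simp only [triangleOf, mem_insert, mem_singleton] at hd he
    rcases hd with rfl | rfl | rfl <;> rcases he with rfl | rfl | rfl <;>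
      first | exact absurd rfl hde | (unfold Crosses; omega)

lemma strictMono_of_crosses {d₁ d₂ d₃ : ℕ × ℕ} (h₁₂ : Crosses d₁ d₂) (h₁₃ : Crosses d₁ d₃)
    (h₂₃ : Crosses d₂ d₃) (o₁₂ : d₁.1 < d₂.1) (o₂₃ : d₂.1 < d₃.1) :
    StrictMono ![d₁.1, d₂.1, d₃.1, d₁.2, d₂.2, d₃.2] := by
  unfold Crosses at h₁₂ h₁₃ h₂₃
  simp [Fin.strictMono_iff_lt_succ, Fin.forall_fin_succ]
  omega

lemma exists_triangleOf {s : Finset (ℕ × ℕ)} (hs : s.card = 3)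
    (hcross : ∀ d ∈ s, ∀ e ∈ s, d ≠ e → Crosses d e) :
    ∃ x : Fin 6 → ℕ, StrictMono x ∧ s = triangleOf x := by
  have of_sorted : ∀ d₁ ∈ s, ∀ d₂ ∈ s, ∀ d₃ ∈ s, d₁.1 < d₂.1 → d₂.1 < d₃.1 →
      ∃ x : Fin 6 → ℕ, StrictMono x ∧ s = triangleOf x := by
    intro d₁ h₁ d₂ h₂ d₃ h₃ o₁₂ o₂₃
    have ne_of_fst_lt : ∀ {d e : ℕ × ℕ}, d.1 < e.1 → d ≠ e :=
      fun h he => h.ne (congrArg Prod.fst he)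
    have hx := strictMono_of_crosses (hcross _ h₁ _ h₂ (ne_of_fst_lt o₁₂))
      (hcross _ h₁ _ h₃ (ne_of_fst_lt (o₁₂.trans o₂₃))) (hcross _ h₂ _ h₃ (ne_of_fst_lt o₂₃))
      o₁₂ o₂₃
    refine ⟨_, hx, (eq_of_subset_of_card_le ?_ (by rw [hs, card_triangleOf hx])).symm⟩
    simp [triangleOf, insert_subset_iff, h₁, h₂, h₃]
  obtain ⟨d₁, d₂, d₃, h₁₂, h₁₃, h₂₃, rfl⟩ := card_eq_three.1 hs
  have c₁₂ := (hcross d₁ (by simp) d₂ (by simp) h₁₂).fst_ne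
  have c₁₃ := (hcross d₁ (by simp) d₃ (by simp) h₁₃).fst_ne
  have c₂₃ := (hcross d₂ (by simp) d₃ (by simp) h₂₃).fst_ne
  rcases c₁₂.lt_or_gt with o₁₂ | o₁₂ <;> rcases c₁₃.lt_or_gt with o₁₃ | o₁₃ <;>
    rcases c₂₃.lt_or_gt with o₂₃ | o₂₃
  all_goals first
    | exact of_sorted d₁ (by simp) d₂ (by simp) d₃ (by simp) (by omega) (by omega)
    | exact of_sorted d₁ (by simp) d₃ (by simp) d₂ (by simp) (by omega) (by omega)
    | exact of_sorted d₂ (by simp) d₁ (by simp) d₃ (by simp) (by omega) (by omega)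
    | exact of_sorted d₂ (by simp) d₃ (by simp) d₁ (by simp) (by omega) (by omega)
    | exact of_sorted d₃ (by simp) d₁ (by simp) d₂ (by simp) (by omega) (by omega)
    | exact of_sorted d₃ (by simp) d₂ (by simp) d₁ (by simp) (by omega) (by omega)

lemma card_crossingTriples (N : ℕ) :
    (((Diags N).powersetCard 3).filter
      (fun s => ∀ d ∈ s, ∀ e ∈ s, d ≠ e → Crosses d e)).card = N.choose 6 := by
  rw [show N.choose 6 = ((Icc 1 N).powersetCard 6).card by simp, eq_comm]
  refine card_bij (fun A hA => triangleOf (A.orderEmbOfFin (mem_powersetCard.1 hA).2))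
    (fun A hA => ?_) (fun A hA B hB hAB => ?_) (fun s hs => ?_)
  · obtain ⟨hsub, hcard⟩ := mem_powersetCard.1 hA
    have hmem := fun i => mem_Icc.1 (hsub (A.orderEmbOfFin_mem hcard i))
    exact triangleOf_mem (OrderEmbedding.strictMono _) (hmem 0).1 (hmem 5).2
  · have := congrArg endpoints hAB
    rwa [endpoints_triangleOf, endpoints_triangleOf, image_orderEmbOfFin_univ,
      image_orderEmbOfFin_univ] at this
  · obtain ⟨⟨hsub, hcard⟩, hcross⟩ := mem_filter.1 hs |>.imp_left mem_powersetCard.1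
    obtain ⟨x, hx, rfl⟩ := exists_triangleOf hcard hcross
    have hA : (univ.image x).card = 6 := by rw [card_image_of_injective _ hx.injective, card_fin]
    refine ⟨univ.image x, mem_powersetCard.2 ⟨?_, hA⟩, ?_⟩
    · have h03 := mem_Diags.1 (hsub (by simp [triangleOf]) : (x 0, x 3) ∈ Diags N)
      have h25 := mem_Diags.1 (hsub (by simp [triangleOf]) : (x 2, x 5) ∈ Diags N)
      intro v hv
      obtain ⟨i, -, rfl⟩ := mem_image.1 hv
      exact mem_Icc.2 ⟨h03.1.trans (hx.monotone (Fin.zero_le i)),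
        (hx.monotone (Fin.le_last i)).trans h25.2.2.1⟩
    · rw [← orderEmbOfFin_unique hA (fun i => mem_image_of_mem x (mem_univ i)) hx]

theorem segments_minus_triangles_general (n : ℕ) :
    ((∑ d ∈ Diags (n + 3), Nat.choose (crossNum (n + 3) d) 2 : ℤ)
        - ((((Diags (n + 3)).powersetCard 3).filter
            (fun s => ∀ d ∈ s, ∀ e ∈ s, d ≠ e → Crosses d e)).card : ℤ))
      = 5 * Nat.choose (n + 4) 6 := by
  have hpascal : (n + 4).choose 6 = (n + 3).choose 5 + (n + 3).choose 6 :=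
    Nat.choose_succ_succ _ _
  rw [← Nat.cast_sum, sum_choose_two_crossNum, card_crossingTriples, Nat.self_mul_choose_eq]
  push_cast [hpascal]
  ring

/-- For every `n ≥ 2`, the difference `S_{n+3} - T_{n+3}` between the number of
distinguished segments and the number of 3-element sets of pairwise crossing diagonals
of the convex `(n+3)`-gon equals `5·C(n+4, 6)` (this is `β^{-2,6}(Asⁿ) = b⁴(Z_{Asⁿ})`). -/
theorem segments_minus_triangles (n : ℕ) (hn : 2 ≤ n) :
    ((∑ d ∈ Diags (n + 3), Nat.choose (crossNum (n + 3) d) 2 : ℤ)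
        - ((((Diags (n + 3)).powersetCard 3).filter
            (fun s => ∀ d ∈ s, ∀ e ∈ s, d ≠ e → Crosses d e)).card : ℤ))
      = 5 * Nat.choose (n + 4) 6 :=
  segments_minus_triangles_general n
end

section
/- Let S denote Σ_d C(p(d), 2), the sum over all diagonals d of the convex (n+3)-gon G_{n+3}, where p(d) is the number of diagonals crossing d. If n = 2k−1 is odd (k ≥ 1), then S = ((n+3)/2)·Σ_{l=1}^{k−1} (4l²k² − 2k(2l³+l) + l⁴ + l²) + ((n+3)/4)·k²(k²−1). If n = 2k−2 is even (k ≥ 2), then S = ((n+3)/2)·Σ_{l=1}^{k−1} (4l²k² − 2k(2l³+2l²+l) + (l⁴+2l³+2l²+l)). -/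
open Finset

/-- The number `p(l)` of diagonals crossing a diagonal `(i, i + l + 1)` of length `l` in the
convex `(n+3)`-gon. -/
def lengthCrossNum (n l : ℕ) : ℕ := l * (n + 1 - l)

lemma lengthCrossNum_reflect (n l : ℕ) : lengthCrossNum n (n + 1 - l) = lengthCrossNum n l := by
  unfold lengthCrossNum
  rcases le_total l (n + 1) with h | h
  · rw [Nat.sub_sub_self h, mul_comm]
  · simp [Nat.sub_eq_zero_of_le h]

lemma crossNum_diag {n i l : ℕ} (hi : 1 ≤ i) (hil : i + l ≤ n + 2) :
    crossNum (n + 3) (i, i + l + 1) = lengthCrossNum n l := by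
  have hsplit : (Diags (n + 3)).filter (Crosses (i, i + l + 1))
      = Ioo i (i + l + 1) ×ˢ Ioc (i + l + 1) (n + 3) ∪ Ico 1 i ×ˢ Ioo i (i + l + 1) := by
    ext ⟨a, b⟩
    simp only [Diags, IsDiag, Crosses, mem_filter, mem_product, mem_range, mem_union, mem_Ioo,
      mem_Ioc, mem_Ico]
    omega
  have hdisj : Disjoint (Ioo i (i + l + 1) ×ˢ Ioc (i + l + 1) (n + 3))
      (Ico 1 i ×ˢ Ioo i (i + l + 1)) := by
    rw [disjoint_left]
    rintro ⟨a, b⟩ h₁ h₂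
    simp only [mem_product, mem_Ioo, mem_Ioc, mem_Ico] at h₁ h₂
    omega
  rw [crossNum, hsplit, card_union_of_disjoint hdisj, card_product, card_product, Nat.card_Ioo,
    Nat.card_Ioc, Nat.card_Ico, lengthCrossNum, show i + l + 1 - i - 1 = l by omega,
    Nat.mul_comm (i - 1), ← Nat.mul_add]
  congr 1
  omega

lemma sum_diags_eq_sum_length {M : Type*} [AddCommMonoid M] (n : ℕ) (F : ℕ × ℕ → M) :
    ∑ d ∈ Diags (n + 3), F d
      = ∑ l ∈ Icc 1 n, ∑ i ∈ Icc 1 (n + 2 - l), F (i, i + l + 1) := by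
  rw [sum_sigma']
  refine sum_nbij' (fun d => ⟨d.2 - d.1 - 1, d.1⟩) (fun x => (x.2, x.2 + x.1 + 1))
    ?_ ?_ ?_ ?_ ?_
  all_goals
    simp only [Diags, IsDiag, mem_filter, mem_product, mem_range, mem_sigma, mem_Icc,
      Prod.forall, Sigma.forall, Prod.mk.injEq, Sigma.mk.injEq]
  · intro a b h
    omega
  · intro l i h
    omega
  · intro a b h
    exact ⟨trivial, by omega⟩
  · intro l i h
    exact ⟨by omega, HEq.rfl⟩
  · intro a b h
    rw [show a + (b - a - 1) + 1 = b by omega]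

section Reflection

variable {M : Type*} [AddCommMonoid M]

lemma sum_Icc_one_reflect (f : ℕ → M) (n : ℕ) :
    ∑ l ∈ Icc 1 n, f (n + 1 - l) = ∑ l ∈ Icc 1 n, f l := by
  refine sum_nbij' (fun l => n + 1 - l) (fun l => n + 1 - l) ?_ ?_ ?_ ?_ fun _ _ => rfl
  all_goals intro l hl; simp only [mem_Icc] at hl ⊢; omega

lemma sum_Icc_one_add (f : ℕ → M) (a b : ℕ) :
    ∑ l ∈ Icc 1 (a + b), f l = ∑ l ∈ Icc 1 a, f l + ∑ l ∈ Icc 1 b, f (a + l) := by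
  induction b with
  | zero => simp
  | succ b ih =>
    rw [← add_assoc, sum_Icc_succ_top (by omega), ih, sum_Icc_succ_top (by omega), add_assoc]
    rfl

lemma two_nsmul_sum_Icc_tsub_nsmul_of_symm (f : ℕ → M) (n : ℕ)
    (hf : ∀ l, f (n + 1 - l) = f l) :
    2 • ∑ l ∈ Icc 1 n, (n + 2 - l) • f l = (n + 3) • ∑ l ∈ Icc 1 n, f l := by
  calc 2 • ∑ l ∈ Icc 1 n, (n + 2 - l) • f l
      = ∑ l ∈ Icc 1 n, ((n + 2 - l) • f l + (n + 2 - (n + 1 - l)) • f (n + 1 - l)) := by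
        rw [two_nsmul, sum_add_distrib, sum_Icc_one_reflect fun l => (n + 2 - l) • f l]
    _ = ∑ l ∈ Icc 1 n, (n + 3) • f l := by
        refine sum_congr rfl fun l hl => ?_
        have := (mem_Icc.mp hl).2
        rw [hf, ← add_smul, show n + 2 - l + (n + 2 - (n + 1 - l)) = n + 3 by omega]
    _ = (n + 3) • ∑ l ∈ Icc 1 n, f l := (smul_sum ..).symm

lemma sum_Icc_two_mul_of_symm (f : ℕ → M) (k : ℕ) (hf : ∀ l, f (2 * k + 1 - l) = f l) :
    ∑ l ∈ Icc 1 (2 * k), f l = 2 • ∑ l ∈ Icc 1 k, f l := by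
  rw [two_mul, sum_Icc_one_add, two_nsmul, ← sum_Icc_one_reflect fun l => f (k + l)]
  congr 1
  refine sum_congr rfl fun l hl => ?_
  rw [← hf, show 2 * k + 1 - (k + (k + 1 - l)) = l by have := mem_Icc.mp hl; omega]

lemma sum_Icc_two_mul_add_one_of_symm (f : ℕ → M) (k : ℕ)
    (hf : ∀ l, f (2 * k + 2 - l) = f l) :
    ∑ l ∈ Icc 1 (2 * k + 1), f l = 2 • ∑ l ∈ Icc 1 k, f l + f (k + 1) := by
  rw [show 2 * k + 1 = (k + 1) + k by ring, sum_Icc_one_add, sum_Icc_succ_top (by omega),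
    two_nsmul, ← sum_Icc_one_reflect fun l => f (k + 1 + l), add_right_comm]
  congr 2
  refine sum_congr rfl fun l hl => ?_
  rw [← hf, show 2 * k + 2 - (k + 1 + (k + 1 - l)) = l by have := mem_Icc.mp hl; omega]

end Reflection

lemma sum_choose_crossNum (n : ℕ) :
    (∑ d ∈ Diags (n + 3), (crossNum (n + 3) d).choose 2 : ℚ)
      = (n + 3) / 2 * ∑ l ∈ Icc 1 n, ((lengthCrossNum n l).choose 2 : ℚ) := by
  have hlength : ∀ l ∈ Icc 1 n,
      ∑ i ∈ Icc 1 (n + 2 - l), ((crossNum (n + 3) (i, i + l + 1)).choose 2 : ℚ)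
        = (n + 2 - l) • ((lengthCrossNum n l).choose 2 : ℚ) := by
    intro l hl
    rw [sum_congr rfl fun i hi => by rw [crossNum_diag (mem_Icc.mp hi).1 (by grind)], sum_const,
      Nat.card_Icc, Nat.add_sub_cancel]
  have hsymm := two_nsmul_sum_Icc_tsub_nsmul_of_symm
    (fun l => ((lengthCrossNum n l).choose 2 : ℚ)) n fun l => by rw [lengthCrossNum_reflect]
  rw [sum_diags_eq_sum_length, sum_congr rfl hlength]
  rw [nsmul_eq_mul, nsmul_eq_mul] at hsymm
  push_cast at hsymm
  linarith

lemma two_mul_cast_choose_lengthCrossNum {n l : ℕ} (h : l ≤ n + 1) :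
    2 * ((lengthCrossNum n l).choose 2 : ℚ) = (l * (n + 1 - l)) ^ 2 - l * (n + 1 - l) := by
  rw [Nat.cast_choose_two, lengthCrossNum, Nat.cast_mul, Nat.cast_sub h]
  push_cast
  ring

/-- Lemma 2.5 of the paper (with the misprint in the odd case corrected): closed formulae
for the number `S_{n+3} = Σ_d C(p(d), 2)` of distinguished segments, according to the
parity of `n`. -/
theorem distinguished_segments_formula (n k : ℕ) :
    (n + 1 = 2 * k → 1 ≤ k →
      (∑ d ∈ Diags (n + 3), Nat.choose (crossNum (n + 3) d) 2 : ℚ)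
        = ((n : ℚ) + 3) / 2
            * ∑ l ∈ Finset.Icc 1 (k - 1),
                (4 * (l : ℚ) ^ 2 * (k : ℚ) ^ 2 - 2 * (k : ℚ) * (2 * (l : ℚ) ^ 3 + (l : ℚ))
                  + (l : ℚ) ^ 4 + (l : ℚ) ^ 2)
          + ((n : ℚ) + 3) / 4 * ((k : ℚ) ^ 2 * ((k : ℚ) ^ 2 - 1))) ∧
    (n + 2 = 2 * k → 2 ≤ k →
      (∑ d ∈ Diags (n + 3), Nat.choose (crossNum (n + 3) d) 2 : ℚ)
        = ((n : ℚ) + 3) / 2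
            * ∑ l ∈ Finset.Icc 1 (k - 1),
                (4 * (l : ℚ) ^ 2 * (k : ℚ) ^ 2
                  - 2 * (k : ℚ) * (2 * (l : ℚ) ^ 3 + 2 * (l : ℚ) ^ 2 + (l : ℚ))
                  + ((l : ℚ) ^ 4 + 2 * (l : ℚ) ^ 3 + 2 * (l : ℚ) ^ 2 + (l : ℚ)))) := by
  refine ⟨fun hnk _ => ?_, fun hnk _ => ?_⟩
  · obtain ⟨j, rfl⟩ : ∃ j, k = j + 1 := ⟨k - 1, by omega⟩
    obtain rfl : n = 2 * j + 1 := by omega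
    rw [sum_choose_crossNum, Nat.add_sub_cancel, sum_Icc_two_mul_add_one_of_symm
        (fun l => ((lengthCrossNum (2 * j + 1) l).choose 2 : ℚ)) j
        fun l => congrArg (fun p => (p.choose 2 : ℚ)) (lengthCrossNum_reflect _ l),
      nsmul_eq_mul, Nat.cast_ofNat, mul_sum, mul_add]
    congr 1
    · congr 1
      refine sum_congr rfl fun l hl => ?_
      rw [two_mul_cast_choose_lengthCrossNum (by grind)]
      push_cast
      ring
    · have hmid := two_mul_cast_choose_lengthCrossNum (n := 2 * j + 1) (l := j + 1) (by omega)
      push_cast at hmid ⊢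
      linear_combination ((2 * j + 1 + 3 : ℚ) / 4) * hmid
  · obtain ⟨j, rfl⟩ : ∃ j, k = j + 1 := ⟨k - 1, by omega⟩
    obtain rfl : n = 2 * j := by omega
    rw [sum_choose_crossNum, Nat.add_sub_cancel, sum_Icc_two_mul_of_symm
        (fun l => ((lengthCrossNum (2 * j) l).choose 2 : ℚ)) j
        fun l => congrArg (fun p => (p.choose 2 : ℚ)) (lengthCrossNum_reflect _ l),
      nsmul_eq_mul, Nat.cast_ofNat, mul_sum]
    congr 1
    refine sum_congr rfl fun l hl => ?_
    rw [two_mul_cast_choose_lengthCrossNum (by grind)]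
    push_cast
    ring
end

section
/- Let n ≥ 2 and let d be a maximal diagonal of the convex (n+3)-gon G_{n+3}. Then the number of diagonals of G_{n+3} crossing d equals q(n), where q(n) = n(n+2)/4 if n is even and q(n) = (n+1)²/4 if n is odd. -/
/-- The length of a diagonal of the convex `N`-gon: the smaller of the two numbers of
vertices lying strictly on either side of it. -/
def DiagLen (N : ℕ) (d : ℕ × ℕ) : ℕ :=
  min (d.2 - d.1 - 1) (N - 1 - (d.2 - d.1))

/-- `q n`: the number of distinguished points on a maximal diagonal of the
`(n+3)`-gon; `q(n) = n(n+2)/4` for even `n` and `q(n) = (n+1)²/4` for odd `n`. -/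
def q (n : ℕ) : ℕ := if Even n then n * (n + 2) / 4 else (n + 1) ^ 2 / 4

/-!
A diagonal `e` crosses `d = (a, b)` exactly when it has one endpoint strictly between `a` and
`b` and the other strictly outside, and every such pair of vertices is a diagonal. Hence `d` is
crossed by `k * (n + 1 - k)` diagonals, where `k` and `n + 1 - k` count the vertices on its two
sides. Maximality makes these counts `⌊(n+1)/2⌋` and `⌈(n+1)/2⌉`, whose product is `q n`.
-/

lemma q_eq_mul (n : ℕ) : q n = (n + 1) / 2 * ((n + 2) / 2) := by
  rcases Nat.even_or_odd' n with ⟨m, rfl | rfl⟩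
  · rw [q, if_pos (even_two_mul m), show 2 * m * (2 * m + 2) = 4 * (m * (m + 1)) by ring,
      Nat.mul_div_cancel_left _ four_pos, show (2 * m + 1) / 2 = m by omega,
      show (2 * m + 2) / 2 = m + 1 by omega]
  · rw [q, if_neg (Nat.not_even_iff_odd.mpr (odd_two_mul_add_one m)),
      show (2 * m + 1 + 1) ^ 2 = 4 * ((m + 1) * (m + 1)) by ring,
      Nat.mul_div_cancel_left _ four_pos, show (2 * m + 1 + 1) / 2 = m + 1 by omega,
      show (2 * m + 1 + 2) / 2 = m + 1 by omega]

lemma filter_crosses_eq {N a b : ℕ} (hd : IsDiag N (a, b)) :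
    (Diags N).filter (Crosses (a, b)) =
      Finset.Ioo a b ×ˢ Finset.Ioc b N ∪ Finset.Ico 1 a ×ˢ Finset.Ioo a b := by
  obtain ⟨ha, hab, hb, -⟩ := hd
  ext ⟨x, y⟩
  simp only [Diags, IsDiag, Crosses, Finset.mem_filter, Finset.mem_product, Finset.mem_range,
    Finset.mem_union, Finset.mem_Ioo, Finset.mem_Ioc, Finset.mem_Ico]
  omega

lemma crossNum_eq_mul {N : ℕ} {d : ℕ × ℕ} (hd : IsDiag N d) :
    crossNum N d = (d.2 - d.1 - 1) * (N - 1 - (d.2 - d.1)) := by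
  obtain ⟨a, b⟩ := d
  have hdisj : Disjoint (Finset.Ioo a b ×ˢ Finset.Ioc b N) (Finset.Ico 1 a ×ˢ Finset.Ioo a b) :=
    Finset.disjoint_left.mpr fun e he he' => by
      simp only [Finset.mem_product, Finset.mem_Ioo, Finset.mem_Ioc, Finset.mem_Ico] at he he'
      omega
  have ⟨ha, hab, hb, _⟩ := hd
  dsimp only at ha hab hb ⊢
  rw [crossNum, filter_crosses_eq hd, Finset.card_union_of_disjoint hdisj, Finset.card_product,
    Finset.card_product, Nat.card_Ioo, Nat.card_Ioc, Nat.card_Ico, mul_comm (a - 1),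
    ← Nat.mul_add]
  congr 1
  omega

theorem crossNum_of_maximal_general (n : ℕ) (d : ℕ × ℕ)
    (hd : IsDiag (n + 3) d) (hmax : DiagLen (n + 3) d = (n + 1) / 2) :
    crossNum (n + 3) d = q n := by
  rw [DiagLen] at hmax
  have hmax' : max (d.2 - d.1 - 1) (n + 3 - 1 - (d.2 - d.1)) = (n + 2) / 2 := by
    have ⟨_, hab, hb, _⟩ := hd
    omega
  rw [crossNum_eq_mul hd, q_eq_mul, ← hmax, ← hmax', min_mul_max]

/-- Lemma 2.14: a maximal diagonal of the convex `(n+3)`-gon (one of length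
`⌊(n+1)/2⌋`, the largest possible) is crossed by exactly `q(n)` diagonals. -/
theorem crossNum_of_maximal (n : ℕ) (hn : 2 ≤ n) (d : ℕ × ℕ)
    (hd : IsDiag (n + 3) d) (hmax : DiagLen (n + 3) d = (n + 1) / 2) :
    crossNum (n + 3) d = q n :=
  crossNum_of_maximal_general n d hd hmax
end

section
/- Let n ≥ 2 and let I be a finite set of diagonals of the convex (n+3)-gon G_{n+3} such that the non-crossing graph G(I) has at least two connected components. Then there exists a vertex m ∈ {1,…,n+3} such that the number of diagonals in I having m as an endpoint is at most (n+1)/2, i.e., 2·c_I(m) ≤ n+1, where c_I(m) = #{d ∈ I : m is an endpoint of d}. -/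
/-- The non-crossing graph `G(I)` on a finite set `I` of diagonals: two distinct
diagonals are adjacent iff they do not cross. Its connected components correspond to
the connected components of the union `P_I` of the facets of the associahedron `Asⁿ`
indexed by `I`. -/
def ncGraph (I : Finset (ℕ × ℕ)) : SimpleGraph {x // x ∈ I} where
  Adj d e := d ≠ e ∧ ¬ Crosses d.1 e.1
  symm := ⟨by
    rintro d e ⟨h1, h2⟩
    exact ⟨h1.symm, fun h => h2 (Or.symm h)⟩⟩
  loopless := ⟨fun d h => h.1 rfl⟩

/-- `G(I)` has exactly two connected components, `I₁` and `I₂`: they partition `I`,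
are nonempty, and two diagonals of `I` are joined by a path in the non-crossing graph
iff they lie in the same part. -/
def TwoComponents (I I₁ I₂ : Finset (ℕ × ℕ)) : Prop :=
  I₁ ∪ I₂ = I ∧ Disjoint I₁ I₂ ∧ I₁.Nonempty ∧ I₂.Nonempty ∧
    ∀ (d : ℕ × ℕ) (hd : d ∈ I) (e : ℕ × ℕ) (he : e ∈ I),
      (ncGraph I).Reachable ⟨d, hd⟩ ⟨e, he⟩ ↔
        (d ∈ I₁ ∧ e ∈ I₁) ∨ (d ∈ I₂ ∧ e ∈ I₂)

/-!
Suppose every vertex is an endpoint of at least `(n + 2) / 2` diagonals of `I`, and let `d`, `e`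
lie in different components of `G(I)`, with endpoints `m` of `d` and `m'` of `e`. Diagonals with
a common endpoint never cross, so if some diagonal through `m` failed to cross some diagonal
through `m'`, the path `d, d', e', e` would join `d` to `e`. Hence every diagonal through `m`
crosses every diagonal through `m'`. Crossing diagonals have four distinct endpoints, so the
far endpoints of the diagonals through `m` and through `m'` are pairwise distinct vertices other
than `m` and `m'`: there are at most `n + 1` of them, against the assumed `n + 2`.
-/

open Finset

def diagsThrough (I : Finset (ℕ × ℕ)) (m : ℕ) : Finset (ℕ × ℕ) :=
  I.filter fun d => d.1 = m ∨ d.2 = m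

/-- Meaningful only when `m` is an endpoint of `d`. -/
def otherEnd (m : ℕ) (d : ℕ × ℕ) : ℕ := d.1 + d.2 - m

lemma IsDiag.lt {N : ℕ} {d : ℕ × ℕ} (h : IsDiag N d) : d.1 < d.2 := by
  unfold IsDiag at h; omega

lemma IsDiag.fst_mem_Icc {N : ℕ} {d : ℕ × ℕ} (h : IsDiag N d) : d.1 ∈ Icc 1 N := by
  unfold IsDiag at h; simp only [mem_Icc]; omega

lemma not_crosses_self (d : ℕ × ℕ) : ¬ Crosses d d := by
  unfold Crosses; omega

lemma Crosses.symm {d e : ℕ × ℕ} (h : Crosses d e) : Crosses e d := Or.symm h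

lemma not_crosses_of_common_end {d e : ℕ × ℕ} {m : ℕ} (hd : d.1 = m ∨ d.2 = m)
    (he : e.1 = m ∨ e.2 = m) : ¬ Crosses d e := by
  unfold Crosses; omega

lemma ncGraph_reachable_of_not_crosses {I : Finset (ℕ × ℕ)} {d e : ℕ × ℕ} (hd : d ∈ I)
    (he : e ∈ I) (h : ¬ Crosses d e) : (ncGraph I).Reachable ⟨d, hd⟩ ⟨e, he⟩ := by
  by_cases hde : (⟨d, hd⟩ : {x // x ∈ I}) = ⟨e, he⟩
  · exact hde ▸ SimpleGraph.Reachable.refl _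
  · exact SimpleGraph.Adj.reachable (G := ncGraph I) ⟨hde, h⟩

section diagsThrough

variable {I : Finset (ℕ × ℕ)} {m m' : ℕ}

lemma otherEnd_injOn (hI : ∀ d ∈ I, d.1 < d.2) : Set.InjOn (otherEnd m) (diagsThrough I m) := by
  intro d hd e he h
  simp only [diagsThrough, coe_filter, Set.mem_ofPred_eq] at hd he
  have := hI d hd.1
  have := hI e he.1
  unfold otherEnd at h
  ext <;> omega

lemma otherEnd_mem_of_forall_crosses {N : ℕ} (hI : ∀ d ∈ I, IsDiag N d) {d : ℕ × ℕ}
    (hd : d ∈ diagsThrough I m) (hcross : ∀ e ∈ diagsThrough I m', Crosses d e) :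
    otherEnd m d ∈ Icc 1 N \ {m, m'} := by
  obtain ⟨hdI, hdm⟩ := mem_filter.1 hd
  have hdiag := hI d hdI
  unfold IsDiag at hdiag
  simp only [otherEnd, mem_sdiff, mem_Icc, mem_insert, mem_singleton]
  refine ⟨by omega, ?_⟩
  rintro (h | h)
  · omega
  · -- otherwise `d` itself goes through `m'`, and would have to cross itself
    exact not_crosses_self d (hcross d (mem_filter.2 ⟨hdI, by omega⟩))

lemma card_diagsThrough_add_card_diagsThrough_add_two_le {N : ℕ} (hI : ∀ d ∈ I, IsDiag N d)
    (hm : m ∈ Icc 1 N) (hm' : m' ∈ Icc 1 N) (hmm' : m ≠ m')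
    (hcross : ∀ d ∈ diagsThrough I m, ∀ e ∈ diagsThrough I m', Crosses d e) :
    #(diagsThrough I m) + #(diagsThrough I m') + 2 ≤ N := by
  have hlt : ∀ d ∈ I, d.1 < d.2 := fun d hd => (hI d hd).lt
  set Q := (diagsThrough I m).image (otherEnd m)
  set R := (diagsThrough I m').image (otherEnd m')
  have hQ : Q ⊆ Icc 1 N \ {m, m'} := by
    simp only [Q, image_subset_iff]
    exact fun d hd => otherEnd_mem_of_forall_crosses hI hd (hcross d hd)
  have hR : R ⊆ Icc 1 N \ {m, m'} := by
    simp only [R, image_subset_iff, pair_comm m m']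
    exact fun e he => otherEnd_mem_of_forall_crosses hI he fun d hd => (hcross d hd e he).symm
  have hQR : Disjoint Q R := by
    simp only [Q, R, disjoint_left, mem_image]
    rintro _ ⟨d, hd, rfl⟩ ⟨e, he, he_eq⟩
    obtain ⟨-, hdm⟩ := mem_filter.1 hd
    obtain ⟨-, hem⟩ := mem_filter.1 he
    unfold otherEnd at he_eq
    exact not_crosses_of_common_end (m := otherEnd m d) (by unfold otherEnd; omega)
      (by unfold otherEnd; omega) (hcross d hd e he)
  have hsize : #(Icc 1 N \ {m, m'}) + 2 = N := by
    rw [card_sdiff_of_subset (by simp [insert_subset_iff, hm, hm']), card_pair hmm',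
      Nat.card_Icc]
    simp only [mem_Icc] at hm hm'
    omega
  calc #(diagsThrough I m) + #(diagsThrough I m') + 2 = #(Q ∪ R) + 2 := by
        rw [card_union_of_disjoint hQR, card_image_of_injOn (otherEnd_injOn hlt),
          card_image_of_injOn (otherEnd_injOn hlt)]
    _ ≤ #(Icc 1 N \ {m, m'}) + 2 := by gcongr; exact union_subset hQ hR
    _ = N := hsize

end diagsThrough

theorem exists_vertex_small_degree_general (n : ℕ) (I : Finset (ℕ × ℕ))
    (hdiag : ∀ d ∈ I, IsDiag (n + 3) d)
    (hdisc : ∃ a b : {x // x ∈ I}, ¬ (ncGraph I).Reachable a b) :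
    ∃ m : ℕ, 1 ≤ m ∧ m ≤ n + 3 ∧
      2 * ((I.filter (fun d => d.1 = m ∨ d.2 = m)).card) ≤ n + 1 := by
  obtain ⟨⟨d, hd⟩, ⟨e, he⟩, hde⟩ := hdisc
  have hdm := (hdiag d hd).fst_mem_Icc
  have hem := (hdiag e he).fst_mem_Icc
  by_contra! hbig
  have hcross : ∀ d' ∈ diagsThrough I d.1, ∀ e' ∈ diagsThrough I e.1, Crosses d' e' := by
    intro d' hd' e' he'
    by_contra h
    obtain ⟨hd'I, hd'm⟩ := mem_filter.1 hd'
    obtain ⟨he'I, he'm⟩ := mem_filter.1 he'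
    refine hde (((ncGraph_reachable_of_not_crosses hd hd'I ?_).trans
      (ncGraph_reachable_of_not_crosses hd'I he'I h)).trans
      (ncGraph_reachable_of_not_crosses he'I he ?_))
    · exact not_crosses_of_common_end (Or.inl rfl) hd'm
    · exact not_crosses_of_common_end he'm (Or.inl rfl)
  have hne : d.1 ≠ e.1 := fun h =>
    not_crosses_of_common_end (Or.inl rfl) (Or.inl h.symm)
      (hcross d (mem_filter.2 ⟨hd, Or.inl rfl⟩) e (mem_filter.2 ⟨he, Or.inl rfl⟩))
  have hsum := card_diagsThrough_add_card_diagsThrough_add_two_le hdiag hdm hem hne hcross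
  have hd_big : n + 1 < 2 * #(diagsThrough I d.1) := hbig d.1 (mem_Icc.1 hdm).1 (mem_Icc.1 hdm).2
  have he_big : n + 1 < 2 * #(diagsThrough I e.1) := hbig e.1 (mem_Icc.1 hem).1 (mem_Icc.1 hem).2
  omega

/-- Proposition 2.19: if the non-crossing graph of a set `I` of diagonals of the
`(n+3)`-gon has at least two connected components, then some vertex `m` of the polygon
is an endpoint of at most `(n+1)/2` diagonals of `I`. -/
theorem exists_vertex_small_degree (n : ℕ) (hn : 2 ≤ n) (I : Finset (ℕ × ℕ))
    (hdiag : ∀ d ∈ I, IsDiag (n + 3) d)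
    (hdisc : ∃ a b : {x // x ∈ I}, ¬ (ncGraph I).Reachable a b) :
    ∃ m : ℕ, 1 ≤ m ∧ m ≤ n + 3 ∧
      2 * ((I.filter (fun d => d.1 = m ∨ d.2 = m)).card) ≤ n + 1 :=
  exists_vertex_small_degree_general n I hdiag hdisc
end

section
/- Let n ≥ 3 and let I be a finite set of diagonals of the convex (n+3)-gon G_{n+3} with |I| > q(n)+1. Then the non-crossing graph G(I) is connected. -/
open Finset

def IsChord (N : ℕ) (d : ℕ × ℕ) : Prop := 1 ≤ d.1 ∧ d.1 < d.2 ∧ d.2 ≤ N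

def Incident (w : ℕ) (d : ℕ × ℕ) : Prop := d.1 = w ∨ d.2 = w

instance (w : ℕ) (d : ℕ × ℕ) : Decidable (Incident w d) := by
  unfold Incident; infer_instance

def AllCross (A B : Finset (ℕ × ℕ)) : Prop := ∀ a ∈ A, ∀ b ∈ B, Crosses a b

section

variable {N w : ℕ} {d e : ℕ × ℕ} {A B : Finset (ℕ × ℕ)}

lemma AllCross.symm (h : AllCross A B) : AllCross B A :=
  fun b hb a ha => Or.symm (h a ha b hb)

lemma IsDiag.isChord (h : IsDiag N d) : IsChord N d := by
  obtain ⟨h1, h2, h3, -⟩ := h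
  exact ⟨h1, by omega, h3⟩

lemma IsChord.of_snd_ne (h : IsChord N d) (hN : d.2 ≠ N) : IsChord (N - 1) d := by
  obtain ⟨h1, h2, h3⟩ := h
  exact ⟨h1, h2, by omega⟩

lemma four_le_of_crosses (hd : IsChord N d) (he : IsChord N e) (h : Crosses d e) : 4 ≤ N := by
  unfold IsChord Crosses at *
  omega

lemma not_crosses_of_incident (hd : Incident w d) (he : Incident w e) : ¬ Crosses d e := by
  unfold Incident Crosses at *
  omega

lemma IsChord.incident_iff (h : IsChord N d) : Incident N d ↔ d.2 = N := by
  unfold IsChord Incident at *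
  omega

/-- The rotation `v ↦ v + 1` (with `N ↦ 1`) of the vertices of the `N`-gon, acting on chords
written as increasing pairs. -/
def rotate (N : ℕ) (d : ℕ × ℕ) : ℕ × ℕ :=
  if d.2 = N then (1, d.1 + 1) else (d.1 + 1, d.2 + 1)

lemma mapsTo_rotate : Set.MapsTo (rotate N) {d | IsChord N d} {d | IsChord N d} := by
  intro d hd
  simp only [Set.mem_ofPred_eq, IsChord, rotate] at *
  split_ifs <;> simp only <;> omega

lemma injOn_rotate : Set.InjOn (rotate N) {d | IsChord N d} := by
  intro d hd e he h
  simp only [Set.mem_ofPred_eq, IsChord, rotate, Prod.ext_iff] at *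
  split_ifs at h <;> simp only at h <;> omega

lemma crosses_rotate (hd : IsChord N d) (he : IsChord N e) (h : Crosses d e) :
    Crosses (rotate N d) (rotate N e) := by
  unfold IsChord Crosses rotate at *
  split_ifs <;> simp only <;> omega

lemma incident_succ_rotate_iff (hd : IsChord N d) {v : ℕ} (hv : 1 ≤ v) (hvN : v < N) :
    Incident (v + 1) (rotate N d) ↔ Incident v d := by
  unfold IsChord Incident rotate at *
  split_ifs <;> simp only <;> omega

lemma crosses_rotate_iterate (hd : IsChord N d) (he : IsChord N e) (h : Crosses d e) (k : ℕ) :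
    Crosses ((rotate N)^[k] d) ((rotate N)^[k] e) := by
  induction k with
  | zero => exact h
  | succ k ih =>
    rw [Function.iterate_succ_apply', Function.iterate_succ_apply']
    exact crosses_rotate (mapsTo_rotate.iterate k hd) (mapsTo_rotate.iterate k he) ih

lemma incident_rotate_iterate_iff (hd : IsChord N d) {v : ℕ} (hv : 1 ≤ v) :
    ∀ k, v + k ≤ N → (Incident (v + k) ((rotate N)^[k] d) ↔ Incident v d)
  | 0, _ => Iff.rfl
  | k + 1, hk => by
    rw [Function.iterate_succ_apply', ← add_assoc,
      incident_succ_rotate_iff (mapsTo_rotate.iterate k hd) (by omega) (by omega)]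
    exact incident_rotate_iterate_iff hd hv k (by omega)

lemma mul_add_le_sq_div_four {p s u : ℕ} (hs : 1 ≤ s) : p * s + u ≤ (p + s + u) ^ 2 / 4 := by
  rw [Nat.le_div_iff_mul_le (by norm_num)]
  nlinarith [sq_nonneg ((p : ℤ) - s), sq_nonneg ((p : ℤ) + s + u - 2),
    sq_nonneg ((p : ℤ) - s + u)]

lemma le_sq_div_four_add_one_of_mul_le {S : ℕ} (hN : 4 ≤ N)
    (h : (N - 2) * S ≤ N * ((N - 3) ^ 2 / 4 + 1)) : S ≤ (N - 2) ^ 2 / 4 + 1 := by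
  obtain ⟨x, rfl⟩ : ∃ x, N = x + 4 := ⟨N - 4, by omega⟩
  simp only [show x + 4 - 2 = x + 2 by omega, show x + 4 - 3 = x + 1 by omega] at h ⊢
  have h1 : 4 * ((x + 1) ^ 2 / 4) ≤ (x + 1) ^ 2 := Nat.mul_div_le _ _
  have h2 : (x + 2) ^ 2 ≤ 4 * ((x + 2) ^ 2 / 4) + 1 := by
    rcases Nat.even_or_odd x with ⟨t, rfl⟩ | ⟨t, rfl⟩
    · rw [show (t + t + 2) ^ 2 = 4 * (t + 1) ^ 2 by ring]
      omega
    · rw [show (2 * t + 1 + 2) ^ 2 = 4 * (t ^ 2 + 3 * t + 2) + 1 by ring]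
      omega
  by_contra! hS
  nlinarith

lemma exists_mul_card_incident_le (hN : 1 ≤ N) (D : Finset (ℕ × ℕ))
    (hD : ∀ d ∈ D, IsChord N d) : ∃ w ∈ Icc 1 N, N * #{d ∈ D | Incident w d} ≤ 2 * #D := by
  have handshake : ∑ w ∈ Icc 1 N, #{d ∈ D | Incident w d} = 2 * #D :=
    calc ∑ w ∈ Icc 1 N, #{d ∈ D | Incident w d}
        = ∑ d ∈ D, #{w ∈ Icc 1 N | Incident w d} :=
          sum_card_bipartiteAbove_eq_sum_card_bipartiteBelow Incident
      _ = ∑ d ∈ D, 2 := by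
          refine sum_congr rfl fun d hd => ?_
          obtain ⟨h1, h2, h3⟩ := hD d hd
          have : {w ∈ Icc 1 N | Incident w d} = {d.1, d.2} := by
            ext w
            simp only [mem_filter, mem_Icc, mem_insert, mem_singleton]
            unfold Incident
            omega
          rw [this, card_pair h2.ne]
      _ = 2 * #D := by rw [sum_const, smul_eq_mul, mul_comm]
  refine exists_le_of_sum_le (nonempty_Icc.mpr hN) ?_
  rw [← mul_sum, handshake, sum_const, Nat.card_Icc, smul_eq_mul, Nat.add_sub_cancel]

lemma card_add_card_le_of_forall_snd_eq (hB : ∀ b ∈ B, IsChord N b) (hAne : A.Nonempty)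
    (hBne : B.Nonempty) (hcross : AllCross A B) (htop : ∀ a ∈ A, a.2 = N) :
    #A + #B ≤ (N - 2) ^ 2 / 4 + 1 := by
  set X := A.image Prod.fst
  have hX : X.Nonempty := hAne.image _
  set m := X.min' hX
  set M := X.max' hX
  have mem_of_mem_X : ∀ x ∈ X, (x, N) ∈ A := by
    intro x hx
    obtain ⟨a, ha, rfl⟩ := mem_image.mp hx
    rwa [← htop a ha]
  have hmA := mem_of_mem_X m (X.min'_mem hX)
  have hMA := mem_of_mem_X M (X.max'_mem hX)
  have hAcard : #A ≤ M + 1 - m :=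
    calc #A = #X := (card_image_of_injOn fun a ha a' ha' h =>
          Prod.ext h ((htop a ha).trans (htop a' ha').symm)).symm
      _ ≤ #(Icc m M) := card_le_card fun x hx => mem_Icc.mpr ⟨X.min'_le x hx, X.le_max' x hx⟩
      _ = M + 1 - m := Nat.card_Icc m M
  -- every chord of `B` separates the vertex `N` from all of `m, …, M`
  have hBsub : B ⊆ Icc 1 (m - 1) ×ˢ Icc (M + 1) (N - 1) := by
    intro b hb
    have h1 := hcross _ hmA b hb
    have h2 := hcross _ hMA b hb
    obtain ⟨hb1, hb2, hb3⟩ := hB b hb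
    simp only [mem_product, mem_Icc]
    unfold Crosses at h1 h2
    omega
  have hBcard : #B ≤ (m - 1) * (N - 1 - M) := by
    simpa only [card_product, Nat.card_Icc, Nat.add_sub_cancel, Nat.sub_add_cancel,
      show N - 1 + 1 - (M + 1) = N - 1 - M by omega] using card_le_card hBsub
  obtain ⟨b, hb⟩ := hBne
  have hb' := hBsub hb
  simp only [mem_product, mem_Icc] at hb'
  have hmM : m ≤ M := X.min'_le _ (X.max'_mem hX)
  have key := mul_add_le_sq_div_four (p := m - 1) (s := N - 1 - M) (u := M - m) (by omega)
  rw [show m - 1 + (N - 1 - M) + (M - m) = N - 2 by omega] at key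
  omega

def CrossingBound (N : ℕ) : Prop :=
  ∀ A B : Finset (ℕ × ℕ), (∀ a ∈ A, IsChord N a) → (∀ b ∈ B, IsChord N b) →
    A.Nonempty → B.Nonempty → AllCross A B → #A + #B ≤ (N - 2) ^ 2 / 4 + 1

lemma card_add_card_le_of_not_incident_top (hN : 4 ≤ N) (IH : CrossingBound (N - 1))
    (hA : ∀ a ∈ A, IsChord N a) (hB : ∀ b ∈ B, IsChord N b) (hAne : A.Nonempty)
    (hBne : B.Nonempty) (hcross : AllCross A B) (hBN : ∀ b ∈ B, ¬ Incident N b)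
    (hdeg : N * #{a ∈ A | Incident N a} ≤ 2 * (#A + #B)) :
    #A + #B ≤ (N - 2) ^ 2 / 4 + 1 := by
  by_cases hstar : ∀ a ∈ A, Incident N a
  · exact card_add_card_le_of_forall_snd_eq hB hAne hBne hcross
      fun a ha => (hA a ha).incident_iff.mp (hstar a ha)
  push Not at hstar
  obtain ⟨a₀, ha₀, ha₀N⟩ := hstar
  have hrest : #{a ∈ A | ¬ Incident N a} + #B ≤ (N - 3) ^ 2 / 4 + 1 := by
    refine IH _ B (fun a ha => ?_) (fun b hb => ?_) ⟨a₀, mem_filter.mpr ⟨ha₀, ha₀N⟩⟩ hBne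
      fun a ha => hcross a (mem_filter.mp ha).1
    · obtain ⟨haA, haN⟩ := mem_filter.mp ha
      exact (hA a haA).of_snd_ne fun h => haN (Or.inr h)
    · exact (hB b hb).of_snd_ne fun h => hBN b hb (Or.inr h)
  have hsplit : #{a ∈ A | Incident N a} + #{a ∈ A | ¬ Incident N a} = #A :=
    card_filter_add_card_filter_not _
  refine le_sq_div_four_add_one_of_mul_le hN ?_
  have hS : #A + #B ≤ #{a ∈ A | Incident N a} + ((N - 3) ^ 2 / 4 + 1) := by omega
  generalize #A + #B = S at hS hdeg ⊢
  have := Nat.mul_le_mul_left N hS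
  rw [mul_add] at this
  rw [Nat.sub_mul]
  omega

lemma card_add_card_le_of_not_incident (hN : 4 ≤ N) (IH : CrossingBound (N - 1))
    (hw : w ∈ Icc 1 N) (hA : ∀ a ∈ A, IsChord N a) (hB : ∀ b ∈ B, IsChord N b)
    (hAne : A.Nonempty) (hBne : B.Nonempty) (hcross : AllCross A B)
    (hBw : ∀ b ∈ B, ¬ Incident w b) (hdeg : N * #{a ∈ A | Incident w a} ≤ 2 * (#A + #B)) :
    #A + #B ≤ (N - 2) ^ 2 / 4 + 1 := by
  obtain ⟨hw1, hwN⟩ := mem_Icc.mp hw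
  set f := (rotate N)^[N - w]
  have hf : Set.MapsTo f {d | IsChord N d} {d | IsChord N d} := mapsTo_rotate.iterate _
  have hinj : Set.InjOn f {d | IsChord N d} := injOn_rotate.iterate mapsTo_rotate _
  have hincident : ∀ d, IsChord N d → (Incident N (f d) ↔ Incident w d) := fun d hd => by
    simpa only [show w + (N - w) = N by omega] using
      incident_rotate_iterate_iff hd hw1 (N - w) (by omega)
  have hcard {C : Finset (ℕ × ℕ)} (hC : ∀ c ∈ C, IsChord N c) : #(C.image f) = #C :=
    card_image_of_injOn fun c hc c' hc' => hinj (hC c hc) (hC c' hc')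
  have hdeg' : #{a ∈ A.image f | Incident N a} = #{a ∈ A | Incident w a} := by
    rw [filter_image, hcard fun a ha => hA a (mem_filter.mp ha).1]
    exact congrArg card (filter_congr fun a ha => hincident a (hA a ha))
  have := card_add_card_le_of_not_incident_top hN IH
    (forall_mem_image.mpr fun a ha => hf (hA a ha))
    (forall_mem_image.mpr fun b hb => hf (hB b hb)) (hAne.image f) (hBne.image f)
    (forall_mem_image.mpr fun a ha => forall_mem_image.mpr fun b hb =>
      crosses_rotate_iterate (hA a ha) (hB b hb) (hcross a ha b hb) _)
    (forall_mem_image.mpr fun b hb => (hincident b (hB b hb)).not.mpr (hBw b hb))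
    (by rwa [hdeg', hcard hA, hcard hB])
  rwa [hcard hA, hcard hB] at this

theorem crossingBound (N : ℕ) : CrossingBound N := by
  induction N using Nat.strong_induction_on with
  | _ N IH =>
  intro A B hA hB hAne hBne hcross
  obtain ⟨a₀, ha₀⟩ := hAne
  obtain ⟨b₀, hb₀⟩ := hBne
  have hN : 4 ≤ N := four_le_of_crosses (hA a₀ ha₀) (hB b₀ hb₀) (hcross a₀ ha₀ b₀ hb₀)
  have IH' := IH (N - 1) (by omega)
  have hdisj : Disjoint A B := disjoint_left.mpr fun d hdA hdB =>
    not_crosses_of_incident (Or.inl rfl) (Or.inl rfl) (hcross d hdA d hdB)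
  obtain ⟨w, hw, hdeg⟩ := exists_mul_card_incident_le (by omega) (A ∪ B) fun d hd =>
    (mem_union.mp hd).elim (hA d) (hB d)
  rw [card_union_of_disjoint hdisj] at hdeg
  by_cases hBw : ∀ b ∈ B, ¬ Incident w b
  · refine card_add_card_le_of_not_incident hN IH' hw hA hB ⟨a₀, ha₀⟩ ⟨b₀, hb₀⟩ hcross hBw
      (le_trans ?_ hdeg)
    exact Nat.mul_le_mul_left N (card_le_card (filter_subset_filter _ subset_union_left))
  · push Not at hBw
    obtain ⟨b, hb, hbw⟩ := hBw
    have hAw : ∀ a ∈ A, ¬ Incident w a := fun a ha haw =>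
      not_crosses_of_incident haw hbw (hcross a ha b hb)
    rw [add_comm] at hdeg ⊢
    refine card_add_card_le_of_not_incident hN IH' hw hB hA ⟨b₀, hb₀⟩ ⟨a₀, ha₀⟩ hcross.symm hAw
      (le_trans ?_ hdeg)
    exact Nat.mul_le_mul_left N (card_le_card (filter_subset_filter _ subset_union_right))

lemma exists_allCross_of_not_preconnected {I : Finset (ℕ × ℕ)}
    (h : ¬ (ncGraph I).Preconnected) :
    ∃ A ⊆ I, ∃ B ⊆ I, #A + #B = #I ∧ A.Nonempty ∧ B.Nonempty ∧ AllCross A B := by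
  classical
  simp only [SimpleGraph.Preconnected, not_forall] at h
  obtain ⟨u, v, huv⟩ := h
  let P : ℕ × ℕ → Prop := fun d => ∃ hd : d ∈ I, (ncGraph I).Reachable u ⟨d, hd⟩
  refine ⟨{d ∈ I | P d}, filter_subset _ _, {d ∈ I | ¬ P d}, filter_subset _ _,
    card_filter_add_card_filter_not _, ⟨u, mem_filter.mpr ⟨u.2, u.2, .rfl⟩⟩,
    ⟨v, mem_filter.mpr ⟨v.2, fun ⟨_, h⟩ => huv h⟩⟩, ?_⟩
  intro a ha b hb
  obtain ⟨-, haI, hua⟩ := mem_filter.mp ha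
  obtain ⟨hbI, hub⟩ := mem_filter.mp hb
  by_contra hab
  have hne : (⟨a, haI⟩ : {x // x ∈ I}) ≠ ⟨b, hbI⟩ := fun h => hub ⟨hbI, by
    rw [Subtype.mk.injEq] at h
    subst h
    exact hua⟩
  exact hub ⟨hbI, hua.trans (SimpleGraph.Adj.reachable ⟨hne, hab⟩)⟩

lemma q_eq (n : ℕ) : q n = (n + 1) ^ 2 / 4 := by
  unfold q
  split_ifs with h
  · obtain ⟨t, rfl⟩ := h
    rw [show (t + t + 1) ^ 2 = (t + t) * (t + t + 2) + 1 by ring,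
      show (t + t) * (t + t + 2) = 4 * (t * t + t) by ring]
    omega
  · rfl

end

theorem connected_of_large_general (n : ℕ) (I : Finset (ℕ × ℕ))
    (hdiag : ∀ d ∈ I, IsDiag (n + 3) d) (hcard : q n + 1 < I.card) :
    (ncGraph I).Connected := by
  have hI : I.Nonempty := card_pos.mp (by omega)
  refine (SimpleGraph.connected_iff _).mpr ⟨?_, hI.coe_sort⟩
  by_contra h
  obtain ⟨A, hAI, B, hBI, hAB, hAne, hBne, hcross⟩ := exists_allCross_of_not_preconnected h
  have := crossingBound (n + 3) A B (fun a ha => (hdiag a (hAI ha)).isChord)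
    (fun b hb => (hdiag b (hBI hb)).isChord) hAne hBne hcross
  rw [q_eq] at hcard
  rw [show n + 3 - 2 = n + 1 by omega] at this
  omega

/-- Lemma 2.24: if `I` is a set of diagonals of the `(n+3)`-gon with `|I| > q(n)+1`,
then the non-crossing graph `G(I)` is connected. -/
theorem connected_of_large (n : ℕ) (hn : 3 ≤ n) (I : Finset (ℕ × ℕ))
    (hdiag : ∀ d ∈ I, IsDiag (n + 3) d) (hcard : q n + 1 < I.card) :
    (ncGraph I).Connected :=
  connected_of_large_general n I hdiag hcard
end

section
/- Let b : ℕ → ℕ → ℕ satisfy b(k, 0) = 0 for all k, b(0, i) = 0 for all i, and b(k+1, i) = C(k+1, i) + b(k, i−1) + b(k, i) for all k ≥ 0 and i ≥ 1. Then b(k, i) = i·C(k+1, i+1) for all k ≥ 0 and i ≥ 0. -/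
/-- The recursion of Lemma 3.3 specialised to truncation polytopes, together with its
solution: if `b (k, 0) = 0`, `b (0, i) = 0` and
`b (k+1, i) = C(k+1, i) + b (k, i−1) + b (k, i)` for `i ≥ 1`, then
`b (k, i) = i·C(k+1, i+1)` (this is `β^{-i,2(i+1)}(vcᵏ(Δⁿ))`). -/
theorem truncation_betti_recursion (b : ℕ → ℕ → ℕ)
    (h0 : ∀ k, b k 0 = 0) (h0' : ∀ i, b 0 i = 0)
    (hrec : ∀ k i, 1 ≤ i → b (k + 1) i = Nat.choose (k + 1) i + b k (i - 1) + b k i) :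
    ∀ k i, b k i = i * Nat.choose (k + 1) (i + 1) := by
  intro k
  induction k with
  | zero =>
    intro i
    cases i with
    | zero => simp [h0']
    | succ j => simp [h0', Nat.choose_eq_zero_of_lt (by omega : 1 < j + 2)]
  | succ k ih =>
    intro i
    cases i with
    | zero => simp [h0]
    | succ j =>
      rw [hrec k (j + 1) (by omega), ih, ih]
      simp only [Nat.add_sub_cancel]
      rw [Nat.choose_succ_succ (k + 1) (j + 1)]
      simp only [Nat.succ_eq_add_one]
      ring
end

section
/- Let p ≥ 3 and let C_p be the cycle graph on p vertices. Then for every integer i with 1 ≤ i ≤ p−2: Σ_{W ⊆ V(C_p), |W| = i+1} (c(W) − 1) = i·C(p−2, i+1) + (p−2−i)·C(p−2, p−1−i), where c(W) denotes the number of connected components of the subgraph of C_p induced on W. -/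
/-- `numComp G W`: the number of connected components of the subgraph of `G` induced
on the vertex set `W`. -/
noncomputable def numComp {V : Type*} (G : SimpleGraph V) (W : Finset V) : ℕ :=
  Nat.card (SimpleGraph.ConnectedComponent (G.induce (W : Set V)))

/-!
For `W` a proper subset of the vertices of the cycle `ℤ/p`, every component of the induced
graph is a run of consecutive vertices, and walking forward from any vertex of it one leaves `W`
exactly at the last vertex of the run. So `c(W)` is the number of `v ∈ W` with `v + 1 ∉ W`.
Counting the pairs `(W, v)` the other way, each `v` is such a run end for `C(p - 2, i)` of the
`(i + 1)`-subsets `W`, so `∑ c(W) = p C(p - 2, i)`. Subtracting `C(p, i + 1)` and expanding with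
Pascal's rule and the absorption identity gives the formula.
-/

open Finset

namespace SimpleGraph

variable {V : Type*}

def functionalGraph (f : V → V) : SimpleGraph V := fromRel fun u v ↦ f u = v

variable {f : V → V} {W : Set V}

lemma exists_reachable_induce_functionalGraph_of_iterate_notMem {w : V} (hw : w ∈ W) {k : ℕ}
    (hk : f^[k] w ∉ W) :
    ∃ e, ∃ he : e ∈ W, f e ∉ W ∧
      ((functionalGraph f).induce W).Reachable ⟨w, hw⟩ ⟨e, he⟩ := by
  induction k generalizing w with
  | zero => exact absurd hw hk
  | succ k ih =>
    by_cases hfw : f w ∈ W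
    · obtain ⟨e, he, hfe, hreach⟩ := ih hfw (by rwa [Function.iterate_succ_apply] at hk)
      refine ⟨e, he, hfe, Reachable.trans ?_ hreach⟩
      by_cases hwf : w = f w
      · exact (Subtype.ext hwf : (⟨w, hw⟩ : W) = ⟨f w, hfw⟩) ▸ Reachable.refl _
      · exact Adj.reachable (by simp [functionalGraph, hwf])
    · exact ⟨w, hw, hfw, Reachable.refl _⟩

lemma exists_iterate_eq_of_adj_functionalGraph {e u v : V} (he : f e ∉ W) (hv : v ∈ W)
    (hadj : (functionalGraph f).Adj u v)
    (hu : ∃ k, f^[k] u = e ∧ ∀ j ≤ k, f^[j] u ∈ W) :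
    ∃ k, f^[k] v = e ∧ ∀ j ≤ k, f^[j] v ∈ W := by
  obtain ⟨k, rfl, hk⟩ := hu
  obtain ⟨-, rfl | rfl⟩ := hadj
  · cases k with
    | zero => exact absurd hv he
    | succ k =>
      refine ⟨k, (Function.iterate_succ_apply f k u).symm, fun j hj ↦ ?_⟩
      simpa only [Function.iterate_succ_apply] using hk (j + 1) (by omega)
  · refine ⟨k + 1, Function.iterate_succ_apply f k v, fun j hj ↦ ?_⟩
    cases j with
    | zero => exact hv
    | succ j => simpa only [Function.iterate_succ_apply] using hk j (by omega)

lemma eq_of_reachable_induce_functionalGraph {e e' : V} (he : e ∈ W) (he' : e' ∈ W)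
    (hfe : f e ∉ W) (hfe' : f e' ∉ W)
    (h : ((functionalGraph f).induce W).Reachable ⟨e, he⟩ ⟨e', he'⟩) : e = e' := by
  -- Walking inside `W` away from the run end `e` preserves "iterating `f` inside `W` leads to `e`".
  have hrun : ∀ y : W, ((functionalGraph f).induce W).Reachable ⟨e, he⟩ y →
      ∃ k, f^[k] y.1 = e ∧ ∀ j ≤ k, f^[j] y.1 ∈ W := by
    intro y hy
    rw [reachable_eq_reflTransGen] at hy
    induction hy with
    | refl => exact ⟨0, rfl, fun j hj ↦ by simpa [Nat.le_zero.mp hj] using he⟩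
    | tail _ hadj ih => exact exists_iterate_eq_of_adj_functionalGraph hfe (Subtype.prop _) hadj ih
  obtain ⟨_ | k, hk, hW⟩ := hrun _ h
  · exact hk.symm
  · exact absurd (hW 1 (by omega)) hfe'

theorem card_connectedComponent_induce_functionalGraph (hW : ∀ w ∈ W, ∃ k, f^[k] w ∉ W) :
    Nat.card ((functionalGraph f).induce W).ConnectedComponent =
      Nat.card {e // e ∈ W ∧ f e ∉ W} := by
  refine (Nat.card_congr (Equiv.ofBijective
    (fun e ↦ ((functionalGraph f).induce W).connectedComponentMk ⟨e.1, e.2.1⟩) ⟨?_, ?_⟩)).symm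
  · rintro ⟨e, he, hfe⟩ ⟨e', he', hfe'⟩ h
    exact Subtype.ext <|
      eq_of_reachable_induce_functionalGraph he he' hfe hfe' (ConnectedComponent.exact h)
  · refine ConnectedComponent.ind fun ⟨w, hw⟩ ↦ ?_
    obtain ⟨k, hk⟩ := hW w hw
    obtain ⟨e, he, hfe, hreach⟩ := exists_reachable_induce_functionalGraph_of_iterate_notMem hw hk
    exact ⟨⟨e, he, hfe⟩, (ConnectedComponent.sound hreach).symm⟩

theorem cycleGraph_eq_functionalGraph (n : ℕ) :
    cycleGraph (n + 2) = functionalGraph (· + 1) := by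
  ext u v
  simp only [cycleGraph_adj, functionalGraph, fromRel_adj, sub_eq_iff_eq_add',
    eq_comm (a := u), eq_comm (a := v)]
  refine ⟨fun h ↦ ⟨?_, h.symm⟩, fun h ↦ h.2.symm⟩
  rintro rfl
  simp at h

end SimpleGraph

open SimpleGraph

lemma one_le_numComp {V : Type*} [Finite V] (G : SimpleGraph V) {W : Finset V}
    (hW : W.Nonempty) : 1 ≤ numComp G W :=
  have : Nonempty W := hW.to_subtype
  Nat.card_pos

lemma numComp_cycleGraph {n : ℕ} {W : Finset (Fin (n + 2))} (hW : W ≠ univ) :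
    numComp (cycleGraph (n + 2)) W = #{v | v ∈ W ∧ v + 1 ∉ W} := by
  obtain ⟨b, hb⟩ : ∃ b, b ∉ W := by simpa [eq_univ_iff_forall] using hW
  have hescape : ∀ w ∈ (W : Set (Fin (n + 2))), ∃ k, (· + 1)^[k] w ∉ (W : Set (Fin (n + 2))) :=
    fun w _ ↦ ⟨(b - w).val, by open Fin.NatCast in simpa [nsmul_one] using hb⟩
  rw [numComp, cycleGraph_eq_functionalGraph,
    card_connectedComponent_induce_functionalGraph hescape, Nat.card_eq_fintype_card,
    Fintype.card_subtype]
  simp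

lemma card_filter_powersetCard_mem_notMem {α : Type*} [Fintype α] [DecidableEq α] {a b : α}
    (hab : a ≠ b) (k : ℕ) :
    #{W ∈ univ.powersetCard (k + 1) | a ∈ W ∧ b ∉ W} = (Fintype.card α - 2).choose k := by
  rw [← card_compl_add_card {a, b}, card_pair hab, Nat.add_sub_cancel, ← card_powersetCard]
  have subset_compl_pair {U : Finset α} : U ⊆ {a, b}ᶜ ↔ a ∉ U ∧ b ∉ U := by
    rw [subset_compl_iff_disjoint_right, disjoint_insert_right, disjoint_singleton_right]
  refine card_nbij' (·.erase a) (insert a) (fun W hW ↦ ?_) (fun U hU ↦ ?_)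
    (fun W hW ↦ insert_erase (mem_filter.mp hW).2.1)
    (fun U hU ↦ erase_insert (subset_compl_pair.mp (mem_powersetCard.mp hU).1).1)
  · obtain ⟨hW, ha, hb⟩ := mem_filter.mp hW
    rw [mem_coe, mem_powersetCard, subset_compl_pair, card_erase_of_mem ha,
      (mem_powersetCard.mp hW).2]
    exact ⟨⟨notMem_erase a W, fun h ↦ hb (mem_of_mem_erase h)⟩, rfl⟩
  · obtain ⟨hU, hcard⟩ := mem_powersetCard.mp hU
    obtain ⟨ha, hb⟩ := subset_compl_pair.mp hU
    rw [mem_coe, mem_filter, mem_powersetCard, card_insert_of_notMem ha, hcard]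
    exact ⟨⟨subset_univ _, rfl⟩, mem_insert_self a U, by simpa [hab.symm] using hb⟩

lemma sum_numComp_cycleGraph {n i : ℕ} (hi : i ≤ n) :
    ∑ W ∈ univ.powersetCard (i + 1), numComp (cycleGraph (n + 2)) W = (n + 2) * n.choose i := by
  have hne : ∀ W ∈ (univ : Finset (Fin (n + 2))).powersetCard (i + 1), W ≠ univ := fun W hW ↦ by
    rw [← card_lt_iff_ne_univ, (mem_powersetCard.mp hW).2, Fintype.card_fin]
    omega
  calc ∑ W ∈ univ.powersetCard (i + 1), numComp (cycleGraph (n + 2)) W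
      = ∑ W ∈ univ.powersetCard (i + 1), #{v | v ∈ W ∧ v + 1 ∉ W} :=
        sum_congr rfl fun W hW ↦ numComp_cycleGraph (hne W hW)
    _ = ∑ v, #{W ∈ univ.powersetCard (i + 1) | v ∈ W ∧ v + 1 ∉ W} :=
        sum_card_bipartiteAbove_eq_sum_card_bipartiteBelow _
    _ = ∑ _v : Fin (n + 2), n.choose i := sum_congr rfl fun v _ ↦ by
        rw [card_filter_powersetCard_mem_notMem (by simp), Fintype.card_fin, Nat.add_sub_cancel]
    _ = (n + 2) * n.choose i := by simp

theorem Nat.add_two_mul_choose (m i : ℕ) (hi1 : 1 ≤ i) (hi2 : i ≤ m) :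
    (m + 2) * m.choose i =
      (m + 2).choose (i + 1) + i * m.choose (i + 1) + (m - i) * m.choose (m + 1 - i) := by
  obtain ⟨j, rfl⟩ : ∃ j, i = j + 1 := ⟨i - 1, by omega⟩
  obtain ⟨k, rfl⟩ : ∃ k, m = j + 1 + k := ⟨m - (j + 1), by omega⟩
  set m := j + 1 + k
  have hsymm : m.choose (m + 1 - (j + 1)) = m.choose j :=
    choose_symm_of_eq_add (by omega)
  have hpascal : (m + 2).choose (j + 2) = m.choose j + 2 * m.choose (j + 1) + m.choose (j + 2) := by
    rw [choose_succ_succ', choose_succ_succ', choose_succ_succ' m (j + 1)]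
    ring
  have habs₁ : m.choose (j + 2) * (j + 2) = m.choose (j + 1) * k := by
    rw [choose_succ_right_eq, show m - (j + 1) = k by omega]
  have habs₂ : m.choose (j + 1) * (j + 1) = m.choose j * (k + 1) := by
    rw [choose_succ_right_eq, show m - j = k + 1 by omega]
  rw [hsymm, hpascal, show m - (j + 1) = k by omega]
  linear_combination habs₂ - habs₁

theorem cycle_graph_betti_general (p : ℕ) (i : ℕ) (hi1 : 1 ≤ i) (hi2 : i ≤ p - 2) :
    ∑ W ∈ (Finset.univ : Finset (Fin p)).powersetCard (i + 1),
        (numComp (SimpleGraph.cycleGraph p) W - 1)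
      = i * Nat.choose (p - 2) (i + 1) + (p - 2 - i) * Nat.choose (p - 2) (p - 1 - i) := by
  obtain ⟨n, rfl⟩ : ∃ n, p = n + 2 := ⟨p - 2, by omega⟩
  have hpos : ∀ W ∈ (univ : Finset (Fin (n + 2))).powersetCard (i + 1),
      1 ≤ numComp (cycleGraph (n + 2)) W := fun W hW ↦
    one_le_numComp _ (card_pos.mp (by rw [(mem_powersetCard.mp hW).2]; omega))
  rw [sum_tsub_distrib _ hpos, sum_numComp_cycleGraph (by omega), sum_const, card_powersetCard,
    card_univ, Fintype.card_fin, smul_eq_mul, mul_one, Nat.add_two_mul_choose n i hi1 (by omega)]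
  simp only [Nat.add_sub_cancel, show n + 2 - 1 - i = n + 1 - i by omega]
  omega

/-- Proposition 3.6 (combinatorial content, via Hochster's formula): for the cycle
graph `C_p` on `p ≥ 3` vertices and `1 ≤ i ≤ p−2`,
`Σ_{|W| = i+1} (c(W) − 1) = i·C(p−2, i+1) + (p−2−i)·C(p−2, p−1−i)`. -/
theorem cycle_graph_betti (p : ℕ) (hp : 3 ≤ p) (i : ℕ) (hi1 : 1 ≤ i) (hi2 : i ≤ p - 2) :
    ∑ W ∈ (Finset.univ : Finset (Fin p)).powersetCard (i + 1),
        (numComp (SimpleGraph.cycleGraph p) W - 1)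
      = i * Nat.choose (p - 2) (i + 1) + (p - 2 - i) * Nat.choose (p - 2) (p - 1 - i) :=
  cycle_graph_betti_general p i hi1 hi2
end
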